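/- arXiv:2305.13166 — 2 statements merged into one kernel-verified Lean document; each statement's English description precedes it below -/
import Mathlib

section
/- Let 𝒜 ∈ Sp(2d,ℝ) be shift-invertible and set G_𝒜 := L·E_𝒜^{−1}·ℰ_𝒜. Then 𝒜 admits the factorization 𝒜 = 𝒟_{E_𝒜^{−1}} · V_{M_𝒜} · V_Lᵀ · Lift(G_𝒜), a product of four symplectic matrices. -/
open Matrix

/-- Index type for `2d × 2d` matrices, viewed as two `d`-blocks. -/
abbrev I2 (d : ℕ) := Fin d ⊕ Fin d

/-- Index type for `4d × 4d` matrices, viewed as four `d`-blocks. -/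
abbrev I4 (d : ℕ) := I2 d ⊕ I2 d

/-- The standard symplectic matrix `J = [[0, I], [-I, 0]]`. -/
def symplJ (α : Type*) [Fintype α] [DecidableEq α] : Matrix (α ⊕ α) (α ⊕ α) ℝ :=
  fromBlocks 0 1 (-1) 0

/-- `A` is symplectic if `Aᵀ J A = J`. -/
def IsSymplectic {α : Type*} [Fintype α] [DecidableEq α]
    (A : Matrix (α ⊕ α) (α ⊕ α) ℝ) : Prop :=
  Aᵀ * symplJ α * A = symplJ α

/-- Embedding of the "odd" block columns (blocks 1 and 3) of a `4d×4d` matrix. -/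
def colOdd (d : ℕ) : I2 d → I4 d :=
  Sum.elim (fun i => Sum.inl (Sum.inl i)) (fun i => Sum.inr (Sum.inl i))

/-- Embedding of the "even" block columns (blocks 2 and 4) of a `4d×4d` matrix. -/
def colEven (d : ℕ) : I2 d → I4 d :=
  Sum.elim (fun i => Sum.inl (Sum.inr i)) (fun i => Sum.inr (Sum.inr i))

/-- `E_𝒜 = [[A₁₁, A₁₃], [A₂₁, A₂₃]]`. -/
def subE {d : ℕ} (A : Matrix (I4 d) (I4 d) ℝ) : Matrix (I2 d) (I2 d) ℝ :=
  A.submatrix Sum.inl (colOdd d)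

/-- `ℰ_𝒜 = [[A₁₂, A₁₄], [A₂₂, A₂₄]]`. -/
def subEE {d : ℕ} (A : Matrix (I4 d) (I4 d) ℝ) : Matrix (I2 d) (I2 d) ℝ :=
  A.submatrix Sum.inl (colEven d)

/-- `F_𝒜 = [[A₃₁, A₃₃], [A₄₁, A₄₃]]`. -/
def subF {d : ℕ} (A : Matrix (I4 d) (I4 d) ℝ) : Matrix (I2 d) (I2 d) ℝ :=
  A.submatrix Sum.inr (colOdd d)

/-- `ℱ_𝒜 = [[A₃₂, A₃₄], [A₄₂, A₄₄]]`. -/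
def subFF {d : ℕ} (A : Matrix (I4 d) (I4 d) ℝ) : Matrix (I2 d) (I2 d) ℝ :=
  A.submatrix Sum.inr (colEven d)

/-- Row/column embedding of the `i`-th `d`-block (i = 1,2,3,4). -/
def r1 (d : ℕ) : Fin d → I4 d := fun i => Sum.inl (Sum.inl i)
def r2 (d : ℕ) : Fin d → I4 d := fun i => Sum.inl (Sum.inr i)
def r3 (d : ℕ) : Fin d → I4 d := fun i => Sum.inr (Sum.inl i)
def r4 (d : ℕ) : Fin d → I4 d := fun i => Sum.inr (Sum.inr i)

/-- The `d×d` block `A_{ij}` of a `4d×4d` matrix, given the row and column embeddings. -/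
def blk {d : ℕ} (A : Matrix (I4 d) (I4 d) ℝ) (ri cj : Fin d → I4 d) :
    Matrix (Fin d) (Fin d) ℝ :=
  A.submatrix ri cj

/-- The symmetric matrix `M_𝒜` associated with a symplectic `4d×4d` matrix `𝒜`. -/
def Mmat {d : ℕ} (A : Matrix (I4 d) (I4 d) ℝ) : Matrix (I2 d) (I2 d) ℝ :=
  fromBlocks
    ((blk A (r1 d) (r1 d))ᵀ * blk A (r3 d) (r1 d) + (blk A (r2 d) (r1 d))ᵀ * blk A (r4 d) (r1 d))
    ((blk A (r3 d) (r1 d))ᵀ * blk A (r1 d) (r3 d) + (blk A (r4 d) (r1 d))ᵀ * blk A (r2 d) (r3 d))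
    ((blk A (r1 d) (r3 d))ᵀ * blk A (r3 d) (r1 d) + (blk A (r2 d) (r3 d))ᵀ * blk A (r4 d) (r1 d))
    ((blk A (r1 d) (r3 d))ᵀ * blk A (r3 d) (r3 d) + (blk A (r2 d) (r3 d))ᵀ * blk A (r4 d) (r3 d))

/-- `𝒟_E = [[E⁻¹, 0], [0, Eᵀ]]`. -/
noncomputable def Dmat {α : Type*} [Fintype α] [DecidableEq α] (E : Matrix α α ℝ) :
    Matrix (α ⊕ α) (α ⊕ α) ℝ :=
  fromBlocks E⁻¹ 0 0 Eᵀ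

/-- `V_C = [[I, 0], [C, I]]`. -/
def Vmat {α : Type*} [Fintype α] [DecidableEq α] (C : Matrix α α ℝ) :
    Matrix (α ⊕ α) (α ⊕ α) ℝ :=
  fromBlocks 1 0 C 1

/-- `L = [[0, I], [I, 0]]` (`2d × 2d`). -/
def Lmat (d : ℕ) : Matrix (I2 d) (I2 d) ℝ :=
  fromBlocks 0 1 1 0

/-- `Lift(G)`: the `4d×4d` matrix with block rows `[I,0,0,0]`, `[0,G₁₁,0,G₁₂]`,
`[0,0,I,0]`, `[0,G₂₁,0,G₂₂]`. -/
def Lift {d : ℕ} (G : Matrix (I2 d) (I2 d) ℝ) : Matrix (I4 d) (I4 d) ℝ :=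
  fromBlocks
    (fromBlocks 1 0 0 (G.submatrix Sum.inl Sum.inl))
    (fromBlocks 0 0 0 (G.submatrix Sum.inl Sum.inr))
    (fromBlocks 0 0 0 (G.submatrix Sum.inr Sum.inl))
    (fromBlocks 1 0 0 (G.submatrix Sum.inr Sum.inr))

/-! Permuting the block columns of `𝒜` into the order `1, 3, 2, 4` turns it into
`[[E, ℰ], [F, ℱ]]`, turns `Lift G` into `diag(I, G)`, and turns `𝒜ᵀ J 𝒜 = J` into block
relations, among them `Eᵀ F - Fᵀ E = J` and `Eᵀ ℱ = Fᵀ ℰ`. In these coordinates, with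
`N = [[0, I], [0, 0]]` and `G = L E⁻¹ ℰ`, the product `𝒟 V_M V_Lᵀ Lift(G)` is
`[[E, ℰ], [E⁻ᵀ (M + N), E⁻ᵀ (M + Nᵀ) E⁻¹ ℰ]]`. By the first relation `M + N = Eᵀ F` and
`M + Nᵀ = Fᵀ E`, and the second then turns the last block into `ℱ`.
The first three factors are symplectic by inspection, hence so is `Lift(G)`, because
`(XY)ᵀ J (XY) = Yᵀ (Xᵀ J X) Y`. -/

section Symplectic

variable {α : Type*} [Fintype α] [DecidableEq α]

theorem IsSymplectic.mul_iff {A B : Matrix (α ⊕ α) (α ⊕ α) ℝ} (hA : IsSymplectic A) :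
    IsSymplectic (A * B) ↔ IsSymplectic B := by
  rw [IsSymplectic, IsSymplectic, transpose_mul, show Bᵀ * Aᵀ * symplJ α * (A * B) =
    Bᵀ * (Aᵀ * symplJ α * A) * B by simp only [Matrix.mul_assoc], hA]

theorem fromBlocks_transpose_mul_symplJ_mul (A B C D : Matrix α α ℝ) :
    (fromBlocks A B C D)ᵀ * symplJ α * fromBlocks A B C D =
      fromBlocks (Aᵀ * C - Cᵀ * A) (Aᵀ * D - Cᵀ * B) (Bᵀ * C - Dᵀ * A) (Bᵀ * D - Dᵀ * B) := by
  simp only [symplJ, fromBlocks_transpose, fromBlocks_multiply, Matrix.mul_zero,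
    Matrix.mul_one, Matrix.mul_neg, Matrix.neg_mul, add_zero, zero_add, neg_add_eq_sub]

theorem isSymplectic_fromBlocks_iff (A B C D : Matrix α α ℝ) :
    IsSymplectic (fromBlocks A B C D) ↔ Aᵀ * C - Cᵀ * A = 0 ∧ Aᵀ * D - Cᵀ * B = 1 ∧
      Bᵀ * C - Dᵀ * A = -1 ∧ Bᵀ * D - Dᵀ * B = 0 := by
  rw [IsSymplectic, fromBlocks_transpose_mul_symplJ_mul, symplJ, fromBlocks_inj]

theorem isSymplectic_Dmat {E : Matrix α α ℝ} (hE : IsUnit E.det) : IsSymplectic (Dmat E) := by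
  have hEEinv : E * E⁻¹ = 1 := mul_nonsing_inv E hE
  rw [Dmat, isSymplectic_fromBlocks_iff, transpose_transpose, ← transpose_mul, hEEinv]
  simp

theorem isSymplectic_Vmat {C : Matrix α α ℝ} (hC : C.IsSymm) : IsSymplectic (Vmat C) := by
  rw [Vmat, isSymplectic_fromBlocks_iff, hC.eq]
  simp

theorem isSymplectic_transpose_Vmat {C : Matrix α α ℝ} (hC : C.IsSymm) :
    IsSymplectic (Vmat C)ᵀ := by
  rw [Vmat, fromBlocks_transpose, isSymplectic_fromBlocks_iff]
  simp [hC.eq]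

def upperShift (α : Type*) [DecidableEq α] : Matrix (α ⊕ α) (α ⊕ α) ℝ :=
  fromBlocks 0 1 0 0

theorem symplJ_eq_upperShift_sub_transpose (α : Type*) [Fintype α] [DecidableEq α] :
    symplJ α = upperShift α - (upperShift α)ᵀ := by
  rw [symplJ, upperShift, fromBlocks_transpose, sub_eq_add_neg, fromBlocks_neg, fromBlocks_add]
  simp

theorem Dmat_inv_mul_Vmat_mul_fromBlocks {E : Matrix α α ℝ} (hE : IsUnit E.det)
    (M N H : Matrix α α ℝ) :
    Dmat E⁻¹ * Vmat M * fromBlocks 1 H N (Nᵀ * H) =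
      fromBlocks E (E * H) (E⁻¹ᵀ * (M + N)) (E⁻¹ᵀ * (M + Nᵀ) * H) := by
  rw [Dmat, Vmat, nonsing_inv_nonsing_inv _ hE]
  simp [fromBlocks_multiply, Matrix.mul_add, Matrix.add_mul, Matrix.mul_assoc]

end Symplectic

theorem transpose_mul_mul_submatrix {R m n k : Type*} [Semiring R] [Fintype m] [Fintype n]
    (A J : Matrix n n R) (e : m ≃ n) (f : k ≃ n) :
    (A.submatrix e f)ᵀ * J.submatrix e e * A.submatrix e f = (Aᵀ * J * A).submatrix f f := by
  rw [transpose_submatrix, submatrix_mul_equiv, submatrix_mul_equiv]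

section Blocks

variable {d : ℕ}

def oddEvenCols (d : ℕ) : I4 d ≃ I4 d where
  toFun := Sum.elim (colOdd d) (colEven d)
  invFun := Sum.elim (colOdd d) (colEven d)
  left_inv := by rintro ((i | i) | (i | i)) <;> rfl
  right_inv := by rintro ((i | i) | (i | i)) <;> rfl

theorem submatrix_oddEvenCols (𝒜 : Matrix (I4 d) (I4 d) ℝ) :
    𝒜.submatrix id (oddEvenCols d) = fromBlocks (subE 𝒜) (subEE 𝒜) (subF 𝒜) (subFF 𝒜) := by
  ext (i | i) (j | j) <;> rfl

theorem symplJ_submatrix_oddEvenCols :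
    (symplJ (I2 d)).submatrix (oddEvenCols d) (oddEvenCols d) =
      fromBlocks (symplJ (Fin d)) 0 0 (symplJ (Fin d)) := by
  ext ((i | i) | (i | i)) ((j | j) | (j | j)) <;>
    simp [symplJ, oddEvenCols, colOdd, colEven, one_apply]

theorem IsSymplectic.block_relations {𝒜 : Matrix (I4 d) (I4 d) ℝ} (h𝒜 : IsSymplectic 𝒜) :
    (subE 𝒜)ᵀ * subF 𝒜 - (subF 𝒜)ᵀ * subE 𝒜 = symplJ (Fin d) ∧
      (subE 𝒜)ᵀ * subFF 𝒜 = (subF 𝒜)ᵀ * subEE 𝒜 := by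
  have h := transpose_mul_mul_submatrix 𝒜 (symplJ (I2 d)) (Equiv.refl _) (oddEvenCols d)
  rw [h𝒜, Equiv.coe_refl, submatrix_id_id, submatrix_oddEvenCols, symplJ_submatrix_oddEvenCols,
    fromBlocks_transpose_mul_symplJ_mul, fromBlocks_inj] at h
  exact ⟨h.1, sub_eq_zero.mp h.2.1⟩

theorem IsSymplectic.Mmat_add_upperShift {𝒜 : Matrix (I4 d) (I4 d) ℝ} (h𝒜 : IsSymplectic 𝒜) :
    Mmat 𝒜 + upperShift (Fin d) = (subE 𝒜)ᵀ * subF 𝒜 := by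
  have h := h𝒜.block_relations.1
  ext (i | i) (j | j)
  -- `Mmat` takes its (1,2) block from `Fᵀ E`, its other blocks from `Eᵀ F`.
  case inl.inr =>
    have h12 := congrFun (congrFun h (Sum.inl i)) (Sum.inr j)
    simp [symplJ, subE, subF, colOdd, mul_apply, Fintype.sum_sum_type] at h12
    simp [Mmat, blk, upperShift, subE, subF, colOdd, r1, r2, r3, r4, mul_apply,
      Fintype.sum_sum_type]
    linarith
  all_goals simp [Mmat, blk, upperShift, subE, subF, colOdd, r1, r2, r3, r4, mul_apply,
    Fintype.sum_sum_type]

theorem IsSymplectic.Mmat_add_transpose_upperShift {𝒜 : Matrix (I4 d) (I4 d) ℝ}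
    (h𝒜 : IsSymplectic 𝒜) : Mmat 𝒜 + (upperShift (Fin d))ᵀ = (subF 𝒜)ᵀ * subE 𝒜 := by
  have h := h𝒜.block_relations.1
  rw [symplJ_eq_upperShift_sub_transpose, ← h𝒜.Mmat_add_upperShift, ← sub_eq_zero] at h
  rw [← sub_eq_zero, ← h]
  abel

theorem IsSymplectic.Mmat_isSymm {𝒜 : Matrix (I4 d) (I4 d) ℝ} (h𝒜 : IsSymplectic 𝒜) :
    (Mmat 𝒜).IsSymm := by
  have h := congrArg transpose h𝒜.Mmat_add_transpose_upperShift
  rw [transpose_add, transpose_transpose, transpose_mul, transpose_transpose,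
    ← h𝒜.Mmat_add_upperShift] at h
  exact add_right_cancel h

theorem Lift_submatrix_oddEvenCols (G : Matrix (I2 d) (I2 d) ℝ) :
    (Lift G).submatrix (oddEvenCols d) (oddEvenCols d) =
      (fromBlocks 1 0 0 G : Matrix (I4 d) (I4 d) ℝ) := by
  ext ((i | i) | (i | i)) ((j | j) | (j | j)) <;>
    simp [Lift, oddEvenCols, colOdd, colEven, one_apply]

theorem mul_Lift_submatrix_oddEvenCols {m : Type*} (Y : Matrix m (I4 d) ℝ)
    (G : Matrix (I2 d) (I2 d) ℝ) :
    (Y * Lift G).submatrix id (oddEvenCols d) =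
      Y.submatrix id (oddEvenCols d) * (fromBlocks 1 0 0 G : Matrix (I4 d) (I4 d) ℝ) := by
  rw [← Lift_submatrix_oddEvenCols, submatrix_mul_equiv]

theorem transpose_Vmat_Lmat_submatrix_oddEvenCols :
    (Vmat (Lmat d))ᵀ.submatrix id (oddEvenCols d) =
      (fromBlocks 1 (Lmat d) (upperShift (Fin d)) (fromBlocks 0 0 0 1) :
        Matrix (I4 d) (I4 d) ℝ) := by
  ext ((i | i) | (i | i)) ((j | j) | (j | j)) <;>
    simp [Vmat, Lmat, upperShift, oddEvenCols, colOdd, colEven, one_apply, eq_comm]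

theorem Lmat_isSymm : (Lmat d).IsSymm := by
  simp [Lmat, IsSymm, fromBlocks_transpose]

theorem Lmat_mul_self : Lmat d * Lmat d = 1 := by
  simp [Lmat, fromBlocks_multiply, ← fromBlocks_one]

theorem transpose_Vmat_Lmat_mul_Lift_submatrix_oddEvenCols (H : Matrix (I2 d) (I2 d) ℝ) :
    ((Vmat (Lmat d))ᵀ * Lift (Lmat d * H)).submatrix id (oddEvenCols d) =
      (fromBlocks 1 H (upperShift (Fin d)) ((upperShift (Fin d))ᵀ * H) :
        Matrix (I4 d) (I4 d) ℝ) := by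
  have hQL : fromBlocks 0 0 0 1 * Lmat d = (upperShift (Fin d))ᵀ := by
    simp [Lmat, upperShift, fromBlocks_multiply, fromBlocks_transpose]
  rw [mul_Lift_submatrix_oddEvenCols, transpose_Vmat_Lmat_submatrix_oddEvenCols,
    fromBlocks_multiply, ← Matrix.mul_assoc, Lmat_mul_self, ← Matrix.mul_assoc, hQL]
  simp

theorem IsSymplectic.eq_factorization {𝒜 : Matrix (I4 d) (I4 d) ℝ} (h𝒜 : IsSymplectic 𝒜)
    (hE : IsUnit (subE 𝒜)) :
    𝒜 = Dmat (subE 𝒜)⁻¹ * Vmat (Mmat 𝒜) * (Vmat (Lmat d))ᵀ *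
      Lift (Lmat d * (subE 𝒜)⁻¹ * subEE 𝒜) := by
  have hdet : IsUnit (subE 𝒜).det := (isUnit_iff_isUnit_det _).mp hE
  apply (reindex (Equiv.refl _) (oddEvenCols d).symm).injective
  simp only [reindex_apply, Equiv.refl_symm, Equiv.symm_symm, Equiv.coe_refl]
  have hEEinv : subE 𝒜 * (subE 𝒜)⁻¹ = 1 := mul_nonsing_inv _ hdet
  have hEinvT : (subE 𝒜)⁻¹ᵀ * (subE 𝒜)ᵀ = 1 := by rw [← transpose_mul, hEEinv, transpose_one]
  rw [submatrix_oddEvenCols, Matrix.mul_assoc, Matrix.mul_assoc (Lmat d),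
    submatrix_mul _ _ id id _ Function.bijective_id, submatrix_id_id,
    transpose_Vmat_Lmat_mul_Lift_submatrix_oddEvenCols, Dmat_inv_mul_Vmat_mul_fromBlocks hdet,
    h𝒜.Mmat_add_upperShift, h𝒜.Mmat_add_transpose_upperShift]
  obtain ⟨-, hEF⟩ := h𝒜.block_relations
  congr 1
  · rw [← Matrix.mul_assoc, hEEinv, Matrix.one_mul]
  · rw [← Matrix.mul_assoc, hEinvT, Matrix.one_mul]
  · rw [Matrix.mul_assoc, Matrix.mul_assoc, ← Matrix.mul_assoc (subE 𝒜), hEEinv, Matrix.one_mul,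
      ← hEF, ← Matrix.mul_assoc, hEinvT, Matrix.one_mul]

end Blocks

/-- Every shift-invertible symplectic matrix `𝒜` factors as
`𝒜 = 𝒟_{E_𝒜⁻¹} · V_{M_𝒜} · V_Lᵀ · Lift(G_𝒜)` with `G_𝒜 = L·E_𝒜⁻¹·ℰ_𝒜`,
a product of four symplectic matrices. -/
theorem shift_invertible_factorization (d : ℕ) (𝒜 : Matrix (I4 d) (I4 d) ℝ)
    (h𝒜 : IsSymplectic 𝒜) (hE : IsUnit (subE 𝒜)) :
    𝒜 = Dmat (subE 𝒜)⁻¹ * Vmat (Mmat 𝒜) * (Vmat (Lmat d))ᵀ *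
          Lift (Lmat d * (subE 𝒜)⁻¹ * subEE 𝒜) ∧
    IsSymplectic (Dmat (subE 𝒜)⁻¹) ∧
    IsSymplectic (Vmat (Mmat 𝒜)) ∧
    IsSymplectic ((Vmat (Lmat d))ᵀ) ∧
    IsSymplectic (Lift (Lmat d * (subE 𝒜)⁻¹ * subEE 𝒜)) := by
  have hfac := h𝒜.eq_factorization hE
  have hD : IsSymplectic (Dmat (subE 𝒜)⁻¹) :=
    isSymplectic_Dmat (isUnit_nonsing_inv_det _ ((isUnit_iff_isUnit_det _).mp hE))
  have hV : IsSymplectic (Vmat (Mmat 𝒜)) := isSymplectic_Vmat h𝒜.Mmat_isSymm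
  have hVL : IsSymplectic (Vmat (Lmat d))ᵀ := isSymplectic_transpose_Vmat Lmat_isSymm
  have hLift := ((hD.mul_iff.mpr hV).mul_iff.mpr hVL).mul_iff.mp (hfac ▸ h𝒜)
  exact ⟨hfac, hD, hV, hVL, hLift⟩
end

section
/- Let 𝒜 ∈ Sp(2d,ℝ) and assume E_𝒜 is invertible. Then the 2d×2d matrix G_𝒜 := L·E_𝒜^{−1}·ℰ_𝒜 is symplectic, i.e. G_𝒜 ∈ Sp(d,ℝ). -/
open Matrix

/-!
Permuting the block columns of `𝒜` turns it into `[[E, ℰ], [F, ℱ]]` and `J` into `diag(J, J)`,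
so `𝒜ᵀJ𝒜 = J` says `EᵀF - FᵀE = J`, `ℰᵀF = ℱᵀE` and `ℰᵀℱ - ℱᵀℰ = J`. Hence `X = E⁻¹ℰ` satisfies
`XᵀJX = ℰᵀ(FE⁻¹ - E⁻ᵀFᵀ)ℰ = ℱᵀℰ - ℰᵀℱ = -J`; as also `LᵀJL = -J`, the product `G = LX` is symplectic.
-/

namespace Matrix

variable {R α : Type*} [CommRing R] [Fintype α]

theorem transpose_mul_mul_of_transpose_mul_mul_eq_neg {J L X : Matrix α α R}
    (hL : Lᵀ * J * L = -J) (hX : Xᵀ * J * X = -J) : (L * X)ᵀ * J * (L * X) = J := by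
  calc (L * X)ᵀ * J * (L * X) = Xᵀ * (Lᵀ * J * L) * X := by
        simp only [transpose_mul, Matrix.mul_assoc]
    _ = J := by rw [hL, Matrix.mul_neg, Matrix.neg_mul, hX, neg_neg]

theorem transpose_submatrix_mul_mul_submatrix {β : Type*} (A M : Matrix α α R) (f : β → α) :
    (A.submatrix id f)ᵀ * M * A.submatrix id f = (Aᵀ * M * A).submatrix f f := by
  rw [submatrix_mul _ _ _ id _ Function.bijective_id,
    submatrix_mul _ _ _ id _ Function.bijective_id, transpose_submatrix, submatrix_id_id]

theorem transpose_nonsing_inv_mul_mul_eq_neg [DecidableEq α] {J E E' F F' : Matrix α α R}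
    (hE : IsUnit E) (hJ : Eᵀ * F - Fᵀ * E = J) (hmix : E'ᵀ * F = F'ᵀ * E)
    (hJ' : E'ᵀ * F' - F'ᵀ * E' = J) :
    (E⁻¹ * E')ᵀ * J * (E⁻¹ * E') = -J := by
  have hEinv : E * E⁻¹ = 1 := mul_nonsing_inv E ((isUnit_iff_isUnit_det E).mp hE)
  have hEinvT : E⁻¹ᵀ * Eᵀ = 1 := by rw [← transpose_mul, hEinv, transpose_one]
  have hmix' : E'ᵀ * F * (E⁻¹ * E') = F'ᵀ * E' := by
    rw [hmix, Matrix.mul_assoc, ← Matrix.mul_assoc E, hEinv, Matrix.one_mul]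
  calc (E⁻¹ * E')ᵀ * J * (E⁻¹ * E')
      = E'ᵀ * (E⁻¹ᵀ * Eᵀ) * F * (E⁻¹ * E') - E'ᵀ * E⁻¹ᵀ * Fᵀ * (E * E⁻¹) * E' := by
        rw [← hJ, transpose_mul]; noncomm_ring
    _ = E'ᵀ * F * (E⁻¹ * E') - (E'ᵀ * F * (E⁻¹ * E'))ᵀ := by
        rw [hEinvT, hEinv]
        simp only [transpose_mul, transpose_transpose, Matrix.mul_one, Matrix.mul_assoc]
    _ = -J := by rw [hmix', transpose_mul, transpose_transpose, ← hJ', neg_sub]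

end Matrix

open Matrix

theorem transpose_fromBlocks_mul_symplJ_mul_fromBlocks {α : Type*} [Fintype α] [DecidableEq α]
    (A B C D : Matrix α α ℝ) :
    (fromBlocks A B C D)ᵀ * symplJ α * fromBlocks A B C D =
      fromBlocks (Aᵀ * C - Cᵀ * A) (Aᵀ * D - Cᵀ * B) (Bᵀ * C - Dᵀ * A) (Bᵀ * D - Dᵀ * B) := by
  simp only [symplJ, fromBlocks_transpose, fromBlocks_multiply]
  simp [sub_eq_neg_add]

theorem Lmat_transpose_mul_symplJ_mul_self (d : ℕ) :
    (Lmat d)ᵀ * symplJ (Fin d) * Lmat d = -symplJ (Fin d) := by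
  simp [Lmat, symplJ, fromBlocks_transpose, fromBlocks_multiply, fromBlocks_neg]

theorem submatrix_colOdd_colEven {d : ℕ} (A : Matrix (I4 d) (I4 d) ℝ) :
    A.submatrix id (Sum.elim (colOdd d) (colEven d)) =
      fromBlocks (subE A) (subEE A) (subF A) (subFF A) := by
  ext (i | i) (j | j) <;> rfl

theorem symplJ_submatrix_colOdd_colEven (d : ℕ) :
    (symplJ (I2 d)).submatrix (Sum.elim (colOdd d) (colEven d)) (Sum.elim (colOdd d) (colEven d)) =
      fromBlocks (symplJ (Fin d)) 0 0 (symplJ (Fin d)) := by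
  ext ((i | i) | (i | i)) ((j | j) | (j | j)) <;> simp [symplJ, colOdd, colEven, one_apply]

theorem IsSymplectic.transpose_fromBlocks_subE_mul_symplJ_mul {d : ℕ}
    {A : Matrix (I4 d) (I4 d) ℝ} (hA : IsSymplectic A) :
    (fromBlocks (subE A) (subEE A) (subF A) (subFF A))ᵀ * symplJ (I2 d) *
        fromBlocks (subE A) (subEE A) (subF A) (subFF A) =
      fromBlocks (symplJ (Fin d)) 0 0 (symplJ (Fin d)) := by
  rw [← submatrix_colOdd_colEven, transpose_submatrix_mul_mul_submatrix, hA,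
    symplJ_submatrix_colOdd_colEven]

/-- If `𝒜 ∈ Sp(2d,ℝ)` and `E_𝒜` is invertible, then `G_𝒜 = L·E_𝒜⁻¹·ℰ_𝒜 ∈ Sp(d,ℝ)`. -/
theorem Gmat_symplectic (d : ℕ) (𝒜 : Matrix (I4 d) (I4 d) ℝ) (h𝒜 : IsSymplectic 𝒜)
    (hE : IsUnit (subE 𝒜)) :
    IsSymplectic (Lmat d * (subE 𝒜)⁻¹ * subEE 𝒜) := by
  have hblocks := h𝒜.transpose_fromBlocks_subE_mul_symplJ_mul
  rw [transpose_fromBlocks_mul_symplJ_mul_fromBlocks] at hblocks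
  obtain ⟨hJ, -, hmix, hJ'⟩ := fromBlocks_inj.mp hblocks
  rw [IsSymplectic, Matrix.mul_assoc (Lmat d)]
  exact transpose_mul_mul_of_transpose_mul_mul_eq_neg (Lmat_transpose_mul_symplJ_mul_self d)
    (transpose_nonsing_inv_mul_mul_eq_neg hE hJ (sub_eq_zero.mp hmix) hJ')
end
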